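/- For all n ≥ 0 and k ≥ 1, W_{m,λ}^{(r)}(n+1,k) − (r − nλ) W_{m,λ}^{(r)}(n,k) = Σ_{l=k−1}^{n} C(n,l) (m)_{n−l,λ} W_{m,λ}^{(r)}(l,k−1), where (m)_{j,λ} = m(m−λ)···(m−(j−1)λ). -/

import Mathlib

/-!
Since `(mx+r)_{n+1,λ} = (mx+r)_{n,λ} (mx+r-nλ)`, the left-hand sides are the coefficients of
`m^k (x)_k` in `mx (mx+r)_{n,λ}`. Splitting `mx + r = m + (m(x-1)+r)`, the Vandermonde identity
for `(·)_{n,λ}`, the expansions of the `(m(x-1)+r)_{l,λ}` and `x (x-1)_j = (x)_{j+1}` write the same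
function with the right-hand sides as coefficients; the falling factorials `(x)_j` are linearly
independent.
-/

open Finset

/-- generalized falling factorial: (x)_{n,λ} = x(x-λ)···(x-(n-1)λ) -/
def dff (lam x : ℝ) (n : ℕ) : ℝ := ∏ i ∈ Finset.range n, (x - i * lam)

/-- generalized rising factorial: ⟨x⟩_{n,λ} = x(x+λ)···(x+(n-1)λ) -/
def drf (lam x : ℝ) (n : ℕ) : ℝ := ∏ i ∈ Finset.range n, (x + i * lam)

theorem dff_succ (lam x : ℝ) (n : ℕ) : dff lam x (n + 1) = dff lam x n * (x - n * lam) :=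
  prod_range_succ _ _

theorem dff_succ' (lam x : ℝ) (n : ℕ) : dff lam x (n + 1) = x * dff lam (x - lam) n := by
  rw [dff, prod_range_succ', mul_comm, dff]
  congr 1
  · simp
  · refine prod_congr rfl fun i _ => ?_
    push_cast
    ring

theorem dff_add (lam a b : ℝ) (n : ℕ) :
    dff lam (a + b) n =
      ∑ ij ∈ antidiagonal n, (n.choose ij.1 : ℝ) * (dff lam a ij.1 * dff lam b ij.2) := by
  induction n with
  | zero => simp [dff]
  | succ n ih =>
    rw [sum_antidiagonal_choose_succ_mul (fun i j => dff lam a i * dff lam b j), dff_succ, ih,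
      sum_mul, ← sum_add_distrib]
    refine sum_congr rfl fun ij hij => ?_
    rw [HasAntidiagonal.mem_antidiagonal] at hij
    rw [← Nat.choose_symm_of_eq_add hij.symm, dff_succ, dff_succ, ← hij]
    push_cast
    ring

theorem dff_one_natCast_of_lt {i j : ℕ} (h : i < j) : dff 1 i j = 0 :=
  prod_eq_zero (mem_range.2 h) (by simp)

theorem dff_one_natCast_self_ne_zero (i : ℕ) : dff 1 i i ≠ 0 :=
  prod_ne_zero_iff.2 fun t ht => by
    rw [mul_one, sub_ne_zero]
    exact_mod_cast (mem_range.1 ht).ne'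

/-- Compare both sides at `x = k`, by strong induction on `k`: `(k)_j = 0` for `j > k` and
`(k)_k ≠ 0`. -/
theorem eq_of_sum_mul_dff_one_eq {N : ℕ} {a b : ℕ → ℝ}
    (h : ∀ x, ∑ j ∈ range (N + 1), a j * dff 1 x j = ∑ j ∈ range (N + 1), b j * dff 1 x j) :
    ∀ k ≤ N, a k = b k := by
  intro k
  induction k using Nat.strong_induction_on with
  | _ k ih =>
    intro hk
    have hsum : ∑ j ∈ range (N + 1), (a j - b j) * dff 1 k j = 0 := by
      simp only [sub_mul, sum_sub_distrib, h, sub_self]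
    rw [sum_eq_single k] at hsum
    · exact sub_eq_zero.1 ((mul_eq_zero.1 hsum).resolve_right (dff_one_natCast_self_ne_zero k))
    · intro j _ hjk
      rcases hjk.lt_or_gt with hjk | hjk
      · rw [ih j hjk (by omega), sub_self, zero_mul]
      · rw [dff_one_natCast_of_lt hjk, mul_zero]
    · intro hk'
      exact absurd (mem_range.2 (by omega)) hk'

structure IsDegenerateWhitney (m r : ℕ) (lam : ℝ) (W : ℕ → ℕ → ℝ) : Prop where
  expansion : ∀ n : ℕ, ∀ x : ℝ,
    dff lam ((m : ℝ) * x + r) n = ∑ k ∈ range (n + 1), W n k * (m : ℝ) ^ k * dff 1 x k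
  eq_zero_of_lt : ∀ n k : ℕ, n < k → W n k = 0

namespace IsDegenerateWhitney

variable {m r : ℕ} {lam : ℝ} {W : ℕ → ℕ → ℝ} (hW : IsDegenerateWhitney m r lam W)
include hW

theorem dff_eq_sum_range_of_le {n N : ℕ} (hnN : n ≤ N) (x : ℝ) :
    dff lam ((m : ℝ) * x + r) n = ∑ k ∈ range (N + 1), W n k * (m : ℝ) ^ k * dff 1 x k := by
  rw [hW.expansion]
  refine sum_subset (range_subset_range.2 (by omega)) fun k _ hk => ?_
  rw [hW.eq_zero_of_lt n k (by simpa using hk), zero_mul, zero_mul]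

theorem sum_sub_mul_dff_one_eq {n N : ℕ} (hnN : n ≤ N) (x : ℝ) :
    ∑ j ∈ range (N + 2), (W (n + 1) j - ((r : ℝ) - n * lam) * W n j) * (m : ℝ) ^ j * dff 1 x j =
      ∑ j ∈ range (N + 1),
        (∑ l ∈ range (n + 1), (n.choose l : ℝ) * dff lam m (n - l) * W l j) * (m : ℝ) ^ (j + 1) *
          dff 1 x (j + 1) := by
  calc _ = dff lam (m * x + r) (n + 1) - (r - n * lam) * dff lam (m * x + r) n := by
        rw [hW.dff_eq_sum_range_of_le (N := N + 1) (by omega),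
          hW.dff_eq_sum_range_of_le (N := N + 1) (by omega), mul_sum, ← sum_sub_distrib]
        exact sum_congr rfl fun j _ => by ring
    _ = m * x * ∑ l ∈ range (n + 1),
          (n.choose l : ℝ) * (dff lam (m * (x - 1) + r) l * dff lam m (n - l)) := by
        rw [← Nat.sum_antidiagonal_eq_sum_range_succ
          (fun i j => (n.choose i : ℝ) * (dff lam (m * (x - 1) + r) i * dff lam m j)),
          ← dff_add, dff_succ]
        ring_nf
    _ = m * x * ∑ l ∈ range (n + 1), (n.choose l : ℝ) *
          ((∑ j ∈ range (N + 1), W l j * (m : ℝ) ^ j * dff 1 (x - 1) j) * dff lam m (n - l)) := by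
        congr 1
        refine sum_congr rfl fun l hl => ?_
        rw [hW.dff_eq_sum_range_of_le (N := N) (by simp at hl; omega)]
    _ = _ := by
        simp only [dff_succ' 1 x, sum_mul, mul_sum]
        rw [sum_comm]
        exact sum_congr rfl fun j _ => sum_congr rfl fun l _ => by ring

theorem succ_sub_eq_sum_range (hm : m ≠ 0) (n k : ℕ) :
    W (n + 1) (k + 1) - ((r : ℝ) - n * lam) * W n (k + 1) =
      ∑ l ∈ range (n + 1), (n.choose l : ℝ) * dff lam m (n - l) * W l k := by
  set S : ℕ → ℝ := fun j => ∑ l ∈ range (n + 1), (n.choose l : ℝ) * dff lam m (n - l) * W l j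
  have hcoeff := eq_of_sum_mul_dff_one_eq (N := n + k + 1)
    (a := fun j => (W (n + 1) j - ((r : ℝ) - n * lam) * W n j) * (m : ℝ) ^ j)
    (b := fun j => if j = 0 then 0 else S (j - 1) * (m : ℝ) ^ j)
    (fun x => by
      rw [sum_range_succ' (fun j => (if j = 0 then 0 else S (j - 1) * (m : ℝ) ^ j) * dff 1 x j)]
      simpa using hW.sum_sub_mul_dff_one_eq (N := n + k) (by omega) x) (k + 1) (by omega)
  simp only [Nat.add_one_ne_zero, if_false, Nat.add_sub_cancel] at hcoeff
  exact mul_right_cancel₀ (pow_ne_zero _ (Nat.cast_ne_zero.2 hm)) hcoeff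

theorem succ_sub_eq_sum_Icc (hm : m ≠ 0) (n k : ℕ) :
    W (n + 1) (k + 1) - ((r : ℝ) - n * lam) * W n (k + 1) =
      ∑ l ∈ Icc k n, (n.choose l : ℝ) * dff lam m (n - l) * W l k := by
  rw [hW.succ_sub_eq_sum_range hm]
  refine (sum_subset (fun l hl => ?_) fun l hln hlk => ?_).symm
  · simp only [mem_Icc, mem_range] at hl ⊢
    omega
  · have hlk : l < k := by
      simp only [mem_Icc, mem_range] at hln hlk
      omega
    rw [hW.eq_zero_of_lt l k hlk, mul_zero]

end IsDegenerateWhitney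

theorem stmt19 (m : ℕ) (hm : 0 < m) (r : ℕ) (lam : ℝ) (W : ℕ → ℕ → ℝ)
    (hW : ∀ n : ℕ, ∀ x : ℝ,
      dff lam ((m : ℝ) * x + r) n = ∑ k ∈ range (n + 1), W n k * (m : ℝ) ^ k * dff 1 x k)
    (hzero : ∀ n k : ℕ, n < k → W n k = 0) :
    ∀ n k : ℕ, 1 ≤ k →
      W (n + 1) k - ((r : ℝ) - n * lam) * W n k =
        ∑ l ∈ Finset.Icc (k - 1) n, (n.choose l : ℝ) * dff lam (m : ℝ) (n - l) * W l (k - 1) := by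
  rintro n k hk
  obtain ⟨k, rfl⟩ := Nat.exists_eq_add_of_le' hk
  exact (IsDegenerateWhitney.mk hW hzero).succ_sub_eq_sum_Icc hm.ne' n k
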